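/- For any finite simple graph G with m edges, the sum over all edges uv of (d(u) + d(v) - 2)^3 equals ξ₄(G) + 3·ReZG₃(G) - 6·F(G) - 12·M₂(G) + 12·M₁(G) - 8m, where these invariants are defined below. (This computes the F-index of the line graph L(G), since the line graph vertex corresponding to edge uv has degree d(u)+d(v)-2.) -/

import Mathlib

open SimpleGraph Finset
open scoped Classical

noncomputable section
namespace Paper

variable {V : Type*} [Fintype V]

/-- Degree as an integer. -/
def d (G : SimpleGraph V) (v : V) : ℤ := G.degree v

/-- Number of edges. -/
def m (G : SimpleGraph V) : ℤ := G.edgeFinset.card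

/-- Sum over unordered edges of a symmetric vertex-pair function. -/
def edgeSum (G : SimpleGraph V) (f : V → V → ℤ) (hf : ∀ u v, f u v = f v u) : ℤ :=
  ∑ e ∈ G.edgeFinset, Sym2.lift ⟨f, hf⟩ e

/-- First Zagreb index. -/
def M1 (G : SimpleGraph V) : ℤ := ∑ v, d G v ^ 2

/-- Second Zagreb index. -/
def M2 (G : SimpleGraph V) : ℤ :=
  edgeSum G (fun u v => d G u * d G v) (by intros; ring)

/-- F-index. -/
def F (G : SimpleGraph V) : ℤ := ∑ v, d G v ^ 3

/-- ξ₄. -/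
def xi4 (G : SimpleGraph V) : ℤ := ∑ v, d G v ^ 4

/-- Redefined third Zagreb index. -/
def ReZG3 (G : SimpleGraph V) : ℤ :=
  edgeSum G (fun u v => d G u * d G v * (d G u + d G v)) (by intros; ring)

/-- F-coindex: sum over edges of the complement with degrees in G. -/
def Fbar (G : SimpleGraph V) : ℤ :=
  edgeSum Gᶜ (fun u v => d G u ^ 2 + d G v ^ 2) (by intros; ring)

/-- Subdivision graph. -/
def subdivision (G : SimpleGraph V) : SimpleGraph (V ⊕ G.edgeSet) where
  Adj x y :=
    match x, y with
    | Sum.inl u, Sum.inr e => u ∈ (e : Sym2 V)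
    | Sum.inr e, Sum.inl u => u ∈ (e : Sym2 V)
    | _, _ => False
  symm := ⟨by rintro (u | e) (v | f) h <;> first | exact h | exact h.elim⟩
  loopless := ⟨by rintro (u | e) <;> simp⟩

/-- Vertex-semitotal graph. -/
def vertexSemitotal (G : SimpleGraph V) : SimpleGraph (V ⊕ G.edgeSet) where
  Adj x y :=
    match x, y with
    | Sum.inl u, Sum.inl v => G.Adj u v
    | Sum.inl u, Sum.inr e => u ∈ (e : Sym2 V)
    | Sum.inr e, Sum.inl u => u ∈ (e : Sym2 V)
    | _, _ => False
  symm := by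
    constructor
    rintro (u | e) (v | f) h
    · exact G.symm.symm _ _ h
    · exact h
    · exact h
    · exact h.elim
  loopless := by
    constructor
    rintro (u | e) h
    · exact G.loopless.irrefl u h
    · exact h

/-- Edge-semitotal graph. -/
def edgeSemitotal (G : SimpleGraph V) : SimpleGraph (V ⊕ G.edgeSet) where
  Adj x y :=
    match x, y with
    | Sum.inl u, Sum.inr e => u ∈ (e : Sym2 V)
    | Sum.inr e, Sum.inl u => u ∈ (e : Sym2 V)
    | Sum.inr e, Sum.inr f => e ≠ f ∧ ∃ v, v ∈ (e : Sym2 V) ∧ v ∈ (f : Sym2 V)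
    | _, _ => False
  symm := by
    constructor
    rintro (u | e) (v | f) h
    · exact h.elim
    · exact h
    · exact h
    · obtain ⟨hne, w, h1, h2⟩ := h
      exact ⟨hne.symm, w, h2, h1⟩
  loopless := by
    constructor
    rintro (u | e) h
    · exact h
    · exact h.1 rfl

/-- Total graph. -/
def total (G : SimpleGraph V) : SimpleGraph (V ⊕ G.edgeSet) where
  Adj x y :=
    match x, y with
    | Sum.inl u, Sum.inl v => G.Adj u v
    | Sum.inl u, Sum.inr e => u ∈ (e : Sym2 V)
    | Sum.inr e, Sum.inl u => u ∈ (e : Sym2 V)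
    | Sum.inr e, Sum.inr f => e ≠ f ∧ ∃ v, v ∈ (e : Sym2 V) ∧ v ∈ (f : Sym2 V)
  symm := by
    constructor
    rintro (u | e) (v | f) h
    · exact G.symm.symm _ _ h
    · exact h
    · exact h
    · obtain ⟨hne, w, h1, h2⟩ := h
      exact ⟨hne.symm, w, h2, h1⟩
  loopless := by
    constructor
    rintro (u | e) h
    · exact G.loopless.irrefl u h
    · exact h.1 rfl

/-- Paraline graph: line graph of the subdivision graph. -/
def paraline (G : SimpleGraph V) : SimpleGraph (subdivision G).edgeSet :=
  (subdivision G).lineGraph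

/-!
Expanding `(a + b - 2) ^ 3` writes the summand as a linear combination of the summands of
`ReZG3` and `M2`, a constant, and terms `g u + g v`. An edge sum of `g u + g v` is the vertex sum
`∑ v, d v * g v`, since `v` lies on exactly `d v` edges; for `g = d ^ 3, d ^ 2, d` these give
`ξ₄`, `F` and `M₁`.
-/

lemma _root_.Sym2.lift_add_eq_sum_toFinset {α M : Type*} [AddCommMonoid M] [DecidableEq α]
    (g : α → M) {e : Sym2 α} (he : ¬e.IsDiag) :
    Sym2.lift ⟨fun u v => g u + g v, fun _ _ => add_comm _ _⟩ e =
      ∑ w ∈ e.toFinset, g w := by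
  induction e using Sym2.ind with
  | _ u v => rw [Sym2.lift_mk, Sym2.toFinset_mk_eq, sum_pair (by simpa using he)]

section EdgeSum

variable (G : SimpleGraph V)

lemma edgeSum_congr {f g : V → V → ℤ} (hf : ∀ u v, f u v = f v u)
    (hg : ∀ u v, g u v = g v u) (h : ∀ u v, f u v = g u v) :
    edgeSum G f hf = edgeSum G g hg := by
  obtain rfl : f = g := funext₂ h
  rfl

lemma edgeSum_add {f g : V → V → ℤ} (hf : ∀ u v, f u v = f v u)
    (hg : ∀ u v, g u v = g v u) :
    edgeSum G (fun u v => f u v + g u v) (fun u v => by rw [hf, hg]) =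
      edgeSum G f hf + edgeSum G g hg := by
  rw [edgeSum, edgeSum, edgeSum, ← sum_add_distrib]
  exact sum_congr rfl fun e _ => Sym2.ind (fun _ _ => rfl) e

lemma edgeSum_sub {f g : V → V → ℤ} (hf : ∀ u v, f u v = f v u)
    (hg : ∀ u v, g u v = g v u) :
    edgeSum G (fun u v => f u v - g u v) (fun u v => by rw [hf, hg]) =
      edgeSum G f hf - edgeSum G g hg := by
  rw [edgeSum, edgeSum, edgeSum, ← sum_sub_distrib]
  exact sum_congr rfl fun e _ => Sym2.ind (fun _ _ => rfl) e

lemma edgeSum_const_mul (c : ℤ) {f : V → V → ℤ} (hf : ∀ u v, f u v = f v u) :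
    edgeSum G (fun u v => c * f u v) (fun u v => by rw [hf]) = c * edgeSum G f hf := by
  rw [edgeSum, edgeSum, mul_sum]
  exact sum_congr rfl fun e _ => Sym2.ind (fun _ _ => rfl) e

lemma edgeSum_const (c : ℤ) : edgeSum G (fun _ _ => c) (fun _ _ => rfl) = c * m G := by
  calc ∑ e ∈ G.edgeFinset, Sym2.lift ⟨fun _ _ => c, _⟩ e = ∑ _e ∈ G.edgeFinset, c :=
        sum_congr rfl fun e _ => Sym2.ind (fun _ _ => rfl) e
    _ = c * m G := by rw [sum_const, nsmul_eq_mul, mul_comm, m]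

lemma edgeSum_add_eq_sum_degree_mul (g : V → ℤ) :
    edgeSum G (fun u v => g u + g v) (fun _ _ => add_comm _ _) = ∑ v, d G v * g v := by
  calc edgeSum G (fun u v => g u + g v) _ = ∑ e ∈ G.edgeFinset, ∑ w ∈ e.toFinset, g w :=
        sum_congr rfl fun e he => Sym2.lift_add_eq_sum_toFinset g
          (G.not_isDiag_of_mem_edgeSet (mem_edgeFinset.mp he))
    _ = ∑ w, ∑ _e ∈ G.incidenceFinset w, g w :=
        sum_comm' fun e w => by simp [incidenceSet, Sym2.mem_toFinset]
    _ = ∑ w, d G w * g w := by simp [d, card_incidenceFinset_eq_degree]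

lemma xi4_eq_edgeSum :
    xi4 G = edgeSum G (fun u v => d G u ^ 3 + d G v ^ 3) (fun _ _ => add_comm _ _) := by
  rw [edgeSum_add_eq_sum_degree_mul]
  exact sum_congr rfl fun v _ => by ring

lemma F_eq_edgeSum :
    F G = edgeSum G (fun u v => d G u ^ 2 + d G v ^ 2) (fun _ _ => add_comm _ _) := by
  rw [edgeSum_add_eq_sum_degree_mul]
  exact sum_congr rfl fun v _ => by ring

lemma M1_eq_edgeSum :
    M1 G = edgeSum G (fun u v => d G u + d G v) (fun _ _ => add_comm _ _) := by
  rw [edgeSum_add_eq_sum_degree_mul]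
  exact sum_congr rfl fun v _ => by ring

end EdgeSum

/-- F-index of the line graph, as an edge sum over G. -/
theorem stmt0 {V : Type*} [Fintype V] (G : SimpleGraph V) :
    edgeSum G (fun u v => (d G u + d G v - 2) ^ 3) (by intros; ring) =
      xi4 G + 3 * ReZG3 G - 6 * F G - 12 * M2 G + 12 * M1 G - 8 * m G := by
  have expand : ∀ u v, (d G u + d G v - 2) ^ 3 =
      (d G u ^ 3 + d G v ^ 3) + 3 * (d G u * d G v * (d G u + d G v))
        - 6 * (d G u ^ 2 + d G v ^ 2) - 12 * (d G u * d G v) + 12 * (d G u + d G v) - 8 :=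
    fun u v => by ring
  rw [xi4_eq_edgeSum, F_eq_edgeSum, M1_eq_edgeSum, ReZG3, M2, ← edgeSum_const G 8]
  simp only [← edgeSum_const_mul, ← edgeSum_add, ← edgeSum_sub]
  exact edgeSum_congr G _ _ expand

end Paper
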